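/- Let f : ℝ → ℝ be square integrable with ∫_ℝ |x f(x)|² dx < ∞ and let L > 0. Then Σ′_{k=0}^∞ (1/L)·| ∫_L^∞ f(x)·cos(kπ(x+L)/(2L)) dx |² ≤ (π²/(6L²))·∫_L^∞ |x f(x)|² dx, where Σ′ indicates that the k = 0 summand is weighted by one-half. -/

import Mathlib

/-!
Cut `(L, ∞)` into the blocks `Jₙ = ((2n+1)L, (2n+3)L]` of length `2L`. On each block the
functions `cos (kπ(x+L)/(2L))` are orthogonal with squared norms `2L` (`k = 0`) and `L` (`k ≥ 1`),
so Bessel's inequality bounds `Σ′ₖ aₙₖ²`, where `aₙₖ` is the coefficient of `f` on `Jₙ`, by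
`L ∫_{Jₙ} f²`, hence by `∫_{Jₙ} |x f|² / ((n+1)² L)` because `x ≥ (n+1)L` on `Jₙ`. The coefficient
over `(L, ∞)` is `Σₙ aₙₖ`, and Cauchy–Schwarz with the weights `1/(n+1)`, whose squares sum to
`π²/6`, gives `|Σₙ aₙₖ|² ≤ (π²/6) Σₙ (n+1)² aₙₖ²`. Summing over `k` and exchanging the two sums
concludes.
-/

open MeasureTheory Real Filter Set Function

section Bessel

variable {α ι : Type*} [MeasurableSpace α] {μ : Measure α}

theorem MeasureTheory.L2.inner_toLp_real {f g : α → ℝ} (hf : MemLp f 2 μ) (hg : MemLp g 2 μ) :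
    inner ℝ (hf.toLp f) (hg.toLp g) = ∫ x, f x * g x ∂μ := by
  rw [L2.inner_def]
  refine integral_congr_ae ?_
  filter_upwards [hf.coeFn_toLp, hg.coeFn_toLp] with x hfx hgx
  rw [hfx, hgx, real_inner_eq_re_inner, RCLike.inner_apply]
  simp [mul_comm]

theorem sum_sq_integral_mul_div_le_integral_sq [DecidableEq ι] {φ : ι → α → ℝ} {c : ι → ℝ}
    (hφ : ∀ k, MemLp (φ k) 2 μ) (hc : ∀ k, 0 < c k)
    (horth : ∀ k j, ∫ x, φ k x * φ j x ∂μ = if k = j then c k else 0)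
    {f : α → ℝ} (hf : MemLp f 2 μ) (S : Finset ι) :
    ∑ k ∈ S, (∫ x, f x * φ k x ∂μ) ^ 2 / c k ≤ ∫ x, f x ^ 2 ∂μ := by
  set v : ι → Lp ℝ 2 μ := fun k => (√(c k))⁻¹ • (hφ k).toLp (φ k)
  have hv : Orthonormal ℝ v := by
    rw [orthonormal_iff_ite]
    intro k j
    simp only [v, real_inner_smul_left, real_inner_smul_right, L2.inner_toLp_real, horth]
    split_ifs with h
    · subst h
      rw [← mul_assoc, ← mul_inv, mul_self_sqrt (hc k).le, inv_mul_cancel₀ (hc k).ne']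
    · simp
  have hbessel := hv.sum_inner_products_le (hf.toLp f) (s := S)
  simp only [v, real_inner_smul_left, L2.inner_toLp_real, norm_mul, norm_inv, Real.norm_eq_abs,
    abs_of_nonneg (sqrt_nonneg _), mul_pow, sq_abs, inv_pow, ← real_inner_self_eq_norm_sq]
    at hbessel
  convert hbessel using 2 with k hk
  · rw [sq_sqrt (hc k).le]
    simp_rw [mul_comm (φ k _)]
    ring
  · simp [sq]

end Bessel

theorem memLp_inv_Ioi {a : ℝ} (ha : 0 < a) :
    MemLp (fun x : ℝ => x⁻¹) 2 (volume.restrict (Ioi a)) := by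
  rw [memLp_two_iff_integrable_sq measurable_inv.aestronglyMeasurable]
  refine (integrableOn_Ioi_rpow_of_lt (by norm_num : (-2 : ℝ) < -1) ha).congr_fun
    (fun x hx => ?_) measurableSet_Ioi
  simp only [rpow_neg (ha.trans hx).le, inv_pow, rpow_two]

theorem integrableOn_Ioi_of_memLp_id_mul {a : ℝ} (ha : 0 < a) {f : ℝ → ℝ}
    (hxf : MemLp (fun x => x * f x) 2 (volume.restrict (Ioi a))) : IntegrableOn f (Ioi a) := by
  refine ((memLp_inv_Ioi ha).integrable_mul hxf).congr ?_
  filter_upwards [ae_restrict_mem measurableSet_Ioi] with x hx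
  simp [inv_mul_cancel_left₀ (ha.trans hx).ne']

theorem HasSum.sq_le_pi_sq_div_six_mul_tsum {a : ℕ → ℝ} {A : ℝ} (ha : HasSum a A)
    (hs : Summable fun n => ((n + 1) * a n) ^ 2) :
    A ^ 2 ≤ π ^ 2 / 6 * ∑' n : ℕ, ((n + 1) * a n) ^ 2 := by
  have hbasel : HasSum (fun n : ℕ => (1 / ((n : ℝ) + 1)) ^ 2) (π ^ 2 / 6) := by
    simpa [one_div, inv_pow] using (hasSum_nat_add_iff' 1).mpr hasSum_zeta_two
  refine le_of_tendsto (ha.pow 2) (Eventually.of_forall fun s => ?_)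
  calc (∑ n ∈ s, a n) ^ 2 = (∑ n ∈ s, 1 / ((n : ℝ) + 1) * ((n + 1) * a n)) ^ 2 := by
        congr 1; refine Finset.sum_congr rfl fun n _ => ?_; field_simp
    _ ≤ (∑ n ∈ s, (1 / ((n : ℝ) + 1)) ^ 2) * ∑ n ∈ s, ((n + 1) * a n) ^ 2 :=
        Finset.sum_mul_sq_le_sq_mul_sq _ _ _
    _ ≤ π ^ 2 / 6 * ∑' n : ℕ, ((n + 1) * a n) ^ 2 := by
        gcongr
        · exact sum_le_hasSum s (fun n _ => by positivity) hbasel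
        · exact hs.sum_le_tsum s fun n _ => by positivity

theorem Finset.sum_mul_tsum_le_tsum {ι β : Type*} {w : ι → ℝ} {b : ι → β → ℝ} {B : β → ℝ}
    (S : Finset ι) (hb : ∀ k ∈ S, Summable (b k)) (hB : Summable B)
    (h : ∀ n, ∑ k ∈ S, w k * b k n ≤ B n) :
    ∑ k ∈ S, w k * ∑' n, b k n ≤ ∑' n, B n := by
  simp_rw [← tsum_mul_left]
  rw [← Summable.tsum_finsetSum fun k hk => (hb k hk).mul_left (w k)]
  exact Summable.tsum_le_tsum h (summable_sum fun k hk => (hb k hk).mul_left (w k)) hB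

theorem sq_mul_setIntegral_sq_le_setIntegral_id_mul_sq {s : Set ℝ} (hs : MeasurableSet s) {c : ℝ}
    (hc : 0 ≤ c) (hcs : ∀ x ∈ s, c ≤ x) {f : ℝ → ℝ}
    (hxf : IntegrableOn (fun x => (x * f x) ^ 2) s) :
    c ^ 2 * ∫ x in s, f x ^ 2 ≤ ∫ x in s, (x * f x) ^ 2 := by
  rw [← integral_const_mul]
  refine integral_mono_of_nonneg (ae_of_all _ fun x => by positivity) hxf ?_
  filter_upwards [ae_restrict_mem hs] with x hx
  rw [mul_pow]
  gcongr
  exact hcs x hx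

theorem integral_cos_int_mul_pi (m N : ℤ) :
    ∫ t in (N : ℝ)..N + 1, cos (m * π * t) = if m = 0 then 1 else 0 := by
  split_ifs with hm
  · simp [hm]
  · have hmπ : (m : ℝ) * π ≠ 0 := mul_ne_zero (Int.cast_ne_zero.2 hm) pi_ne_zero
    rw [intervalIntegral.integral_comp_mul_left (fun t => cos t) hmπ, integral_cos]
    have hsin : ∀ n : ℤ, sin (m * π * n) = 0 := fun n => by
      rw [mul_right_comm, ← Int.cast_mul, sin_int_mul_pi]
    simpa [hsin, hm] using hsin (N + 1)

theorem integral_cos_mul_cos_nat_mul_pi (k j : ℕ) (N : ℤ) :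
    ∫ t in (N : ℝ)..N + 1, cos (k * π * t) * cos (j * π * t) =
      if k = j then (if k = 0 then 1 else 1 / 2) else 0 := by
  have hprod : ∀ t : ℝ, cos (k * π * t) * cos (j * π * t) =
      (cos (((k - j : ℤ) : ℝ) * π * t) + cos (((k + j : ℤ) : ℝ) * π * t)) / 2 := fun t => by
    have := two_mul_cos_mul_cos (k * π * t) (j * π * t)
    push_cast
    rw [sub_mul, sub_mul, add_mul, add_mul]
    linarith
  simp_rw [hprod]
  rw [intervalIntegral.integral_div, intervalIntegral.integral_add, integral_cos_int_mul_pi,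
    integral_cos_int_mul_pi]
  · split_ifs <;> first | omega | norm_num
  all_goals exact (continuous_cos.comp (by fun_prop)).intervalIntegrable _ _

noncomputable def cosWeight (k : ℕ) : ℝ := if k = 0 then 1 / 2 else 1

theorem half_le_cosWeight (k : ℕ) : 1 / 2 ≤ cosWeight k := by
  unfold cosWeight; split_ifs <;> norm_num

noncomputable def cosMode (L : ℝ) (k : ℕ) (x : ℝ) : ℝ := cos (k * π * (x + L) / (2 * L))

theorem continuous_cosMode (L : ℝ) (k : ℕ) : Continuous (cosMode L k) := by
  unfold cosMode; fun_prop

theorem abs_cosMode_le_one (L : ℝ) (k : ℕ) (x : ℝ) : |cosMode L k x| ≤ 1 := abs_cos_le_one _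

def blockEdge (L : ℝ) (n : ℕ) : ℝ := (2 * n + 1) * L

-- `t = (x + L) / (2L)` maps `block L n` onto `(n + 1, n + 2]` and `cosMode L k x` to `cos (kπt)`.
def block (L : ℝ) (n : ℕ) : Set ℝ := Ioc (blockEdge L n) (blockEdge L (n + 1))

noncomputable def blockCoeff (f : ℝ → ℝ) (L : ℝ) (k n : ℕ) : ℝ :=
  ∫ x in block L n, f x * cosMode L k x

section Blocks

variable {L : ℝ}

theorem monotone_blockEdge (hL : 0 < L) : Monotone (blockEdge L) := fun _ _ h =>
  mul_le_mul_of_nonneg_right (by gcongr) hL.le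

theorem pairwise_disjoint_block (hL : 0 < L) : Pairwise (Disjoint on block L) := by
  have := (monotone_blockEdge hL).pairwise_disjoint_on_Ioc_succ
  simp only [Order.succ_eq_add_one] at this
  exact this

theorem iUnion_block (hL : 0 < L) : ⋃ n, block L n = Ioi L := by
  have hunbdd : ¬BddAbove (range (blockEdge L)) := by
    rw [not_bddAbove_iff]
    intro x
    obtain ⟨m, hm⟩ := exists_nat_gt (x / L)
    refine ⟨_, mem_range_self m, ?_⟩
    rw [div_lt_iff₀ hL] at hm
    rw [blockEdge]
    nlinarith
  simpa [block, blockEdge] using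
    iUnion_Ioc_map_succ_eq_Ioi (fun m => monotone_blockEdge hL bot_le) hunbdd

theorem hasSum_setIntegral_block (hL : 0 < L) {g : ℝ → ℝ} (hg : IntegrableOn g (Ioi L)) :
    HasSum (fun n => ∫ x in block L n, g x) (∫ x in Ioi L, g x) := by
  rw [← iUnion_block hL] at hg ⊢
  exact hasSum_integral_iUnion (s := block L) (fun _ => measurableSet_Ioc)
    (pairwise_disjoint_block hL) hg

theorem integral_block_cosMode_mul_cosMode (hL : 0 < L) (n k j : ℕ) :
    ∫ x in block L n, cosMode L k x * cosMode L j x =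
      if k = j then (if k = 0 then 2 * L else L) else 0 := by
  have hscale (k : ℕ) (x : ℝ) : cosMode L k x = cos (k * π * (x / (2 * L) + 1 / 2)) := by
    rw [cosMode]; congr 1; field_simp
  have hlo : blockEdge L n / (2 * L) + 1 / 2 = ((n + 1 : ℤ) : ℝ) := by
    rw [blockEdge]; push_cast; field_simp; ring
  have hhi : blockEdge L (n + 1) / (2 * L) + 1 / 2 = ((n + 1 : ℤ) : ℝ) + 1 := by
    rw [blockEdge]; push_cast; field_simp; ring
  rw [block, ← intervalIntegral.integral_of_le (monotone_blockEdge hL n.le_succ)]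
  simp_rw [hscale]
  rw [intervalIntegral.integral_comp_div_add (fun t => cos (k * π * t) * cos (j * π * t))
    (by positivity), hlo, hhi, integral_cos_mul_cos_nat_mul_pi, smul_eq_mul]
  split_ifs <;> ring

theorem sum_cosWeight_mul_blockCoeff_sq_le (hL : 0 < L) {f : ℝ → ℝ} (n : ℕ)
    (hf : MemLp f 2 (volume.restrict (block L n))) (S : Finset ℕ) :
    ∑ k ∈ S, cosWeight k * blockCoeff f L k n ^ 2 ≤ L * ∫ x in block L n, f x ^ 2 := by
  have : IsFiniteMeasure (volume.restrict (block L n)) := by rw [block]; infer_instance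
  have hmode (k : ℕ) : MemLp (cosMode L k) 2 (volume.restrict (block L n)) :=
    MemLp.of_bound (continuous_cosMode L k).aestronglyMeasurable 1
      (ae_of_all _ (abs_cosMode_le_one L k))
  have hc (k : ℕ) : 0 < (if k = 0 then 2 * L else L) := by split_ifs <;> positivity
  have hbessel := sum_sq_integral_mul_div_le_integral_sq hmode hc
    (integral_block_cosMode_mul_cosMode hL n) hf S
  refine le_of_eq_of_le ?_ (mul_le_mul_of_nonneg_left hbessel hL.le)
  rw [Finset.mul_sum]
  refine Finset.sum_congr rfl fun k _ => ?_
  unfold cosWeight blockCoeff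
  split_ifs <;> field_simp

theorem sum_cosWeight_mul_succ_mul_blockCoeff_sq_le (hL : 0 < L) {f : ℝ → ℝ} (n : ℕ)
    (hf : MemLp f 2 (volume.restrict (block L n)))
    (hxf : IntegrableOn (fun x => (x * f x) ^ 2) (block L n)) (S : Finset ℕ) :
    ∑ k ∈ S, cosWeight k * ((n + 1) * blockCoeff f L k n) ^ 2 ≤
      1 / L * ∫ x in block L n, (x * f x) ^ 2 := by
  have hlow (x : ℝ) (hx : x ∈ block L n) : (n + 1) * L ≤ x := by
    have : (n + 1) * L ≤ blockEdge L n := by rw [blockEdge]; gcongr; linarith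
    exact this.trans hx.1.le
  calc ∑ k ∈ S, cosWeight k * ((n + 1) * blockCoeff f L k n) ^ 2
      = ((n : ℝ) + 1) ^ 2 * ∑ k ∈ S, cosWeight k * blockCoeff f L k n ^ 2 := by
        rw [Finset.mul_sum]; exact Finset.sum_congr rfl fun k _ => by ring
    _ ≤ ((n : ℝ) + 1) ^ 2 * (L * ∫ x in block L n, f x ^ 2) := by
        gcongr; exact sum_cosWeight_mul_blockCoeff_sq_le hL n hf S
    _ = 1 / L * (((n + 1) * L) ^ 2 * ∫ x in block L n, f x ^ 2) := by field_simp
    _ ≤ 1 / L * ∫ x in block L n, (x * f x) ^ 2 := by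
        gcongr
        exact sq_mul_setIntegral_sq_le_setIntegral_id_mul_sq measurableSet_Ioc (by positivity)
          hlow hxf

end Blocks

theorem stmt_11 (f : ℝ → ℝ) (hf : MemLp f 2 (volume : Measure ℝ))
    (hxf : MemLp (fun x => x * f x) 2 (volume : Measure ℝ))
    (L : ℝ) (hL : 0 < L) :
    ∑' k : ℕ, (if k = 0 then (1 / 2 : ℝ) else 1) * ((1 / L) *
        |∫ x in Set.Ioi L, f x * Real.cos (k * π * (x + L) / (2 * L))| ^ 2) ≤
      (π ^ 2 / (6 * L ^ 2)) * ∫ x in Set.Ioi L, |x * f x| ^ 2 := by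
  have hxf2 : IntegrableOn (fun x => (x * f x) ^ 2) (Ioi L) := hxf.integrable_sq.integrableOn
  have hcoeff (k : ℕ) : HasSum (blockCoeff f L k) (∫ x in Ioi L, f x * cosMode L k x) :=
    hasSum_setIntegral_block hL <| (integrableOn_Ioi_of_memLp_id_mul hL (hxf.restrict _)).mul_bdd
      (continuous_cosMode L k).aestronglyMeasurable (ae_of_all _ (abs_cosMode_le_one L k))
  have hmoment : HasSum (fun n => 1 / L * ∫ x in block L n, (x * f x) ^ 2)
      (1 / L * ∫ x in Ioi L, |x * f x| ^ 2) := by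
    simpa only [sq_abs] using (hasSum_setIntegral_block hL hxf2).mul_left (1 / L)
  have hblock (n : ℕ) := sum_cosWeight_mul_succ_mul_blockCoeff_sq_le hL n (hf.restrict _)
    (hxf2.mono_set (iUnion_block hL ▸ subset_iUnion _ n))
  have hsummable (k : ℕ) : Summable fun n : ℕ => ((n + 1) * blockCoeff f L k n) ^ 2 :=
    (hmoment.summable.mul_left 2).of_nonneg_of_le (fun n => sq_nonneg _) fun n => by
      have hk := hblock n {k}
      rw [Finset.sum_singleton] at hk
      nlinarith [half_le_cosWeight k, sq_nonneg ((n + 1) * blockCoeff f L k n)]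
  change ∑' k, cosWeight k * (1 / L * |∫ x in Ioi L, f x * cosMode L k x| ^ 2) ≤ _
  refine tsum_le_of_sum_le' (by positivity) fun S => ?_
  calc ∑ k ∈ S, cosWeight k * (1 / L * |∫ x in Ioi L, f x * cosMode L k x| ^ 2)
      = 1 / L * ∑ k ∈ S, cosWeight k * (∫ x in Ioi L, f x * cosMode L k x) ^ 2 := by
        rw [Finset.mul_sum]; exact Finset.sum_congr rfl fun k _ => by rw [sq_abs]; ring
    _ ≤ 1 / L * ∑ k ∈ S, cosWeight k *
          (π ^ 2 / 6 * ∑' n : ℕ, ((n + 1) * blockCoeff f L k n) ^ 2) := by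
        gcongr with k
        · linarith [half_le_cosWeight k]
        · exact (hcoeff k).sq_le_pi_sq_div_six_mul_tsum (hsummable k)
    _ = π ^ 2 / (6 * L) * ∑ k ∈ S, cosWeight k * ∑' n : ℕ, ((n + 1) * blockCoeff f L k n) ^ 2 := by
        rw [Finset.mul_sum, Finset.mul_sum]; exact Finset.sum_congr rfl fun k _ => by ring
    _ ≤ π ^ 2 / (6 * L) * ∑' n : ℕ, 1 / L * ∫ x in block L n, (x * f x) ^ 2 := by
        gcongr
        exact S.sum_mul_tsum_le_tsum (fun k _ => hsummable k) hmoment.summable (hblock · S)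
    _ = π ^ 2 / (6 * L ^ 2) * ∫ x in Ioi L, |x * f x| ^ 2 := by
        rw [hmoment.tsum_eq]; field_simp
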